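/- There is a bijection between the set of multiple self-avoiding polygons in the m×n grid and the set of nontrivial polygon (m,n)-mosaics, i.e., suitably connected m×n matrices of the seven polygon mosaic tiles with no connection points on the outer boundary edges, excluding the all-T1 matrix. In particular, the number of suitably connected m×n tile matrices with no boundary connection points equals p_{m×n} + 1. -/

import Mathlib

/-- Adjacency in the `m × n` grid graph: two lattice points at Euclidean distance 1. -/
def gridAdj (m n : ℕ) (a b : Fin m × Fin n) : Prop :=
  (a.1 = b.1 ∧ ((a.2 : ℕ) + 1 = (b.2 : ℕ) ∨ (b.2 : ℕ) + 1 = (a.2 : ℕ))) ∨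
  (a.2 = b.2 ∧ ((a.1 : ℕ) + 1 = (b.1 : ℕ) ∨ (b.1 : ℕ) + 1 = (a.1 : ℕ)))

instance (m n : ℕ) (a b : Fin m × Fin n) : Decidable (gridAdj m n a b) := by
  unfold gridAdj; infer_instance

/-- The `m × n` grid graph on vertex set `{1,…,m} × {1,…,n}`. -/
def gridGraph (m n : ℕ) : SimpleGraph (Fin m × Fin n) where
  Adj := gridAdj m n
  symm := by constructor; intro a b h; unfold gridAdj at *; tauto
  loopless := by
    constructor
    intro a h
    rcases h with ⟨_, h⟩ | ⟨_, h⟩ <;> omega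

instance (m n : ℕ) : DecidableRel (gridGraph m n).Adj :=
  fun a b => inferInstanceAs (Decidable (gridAdj m n a b))

/-- The set of multiple self-avoiding polygons in the `m × n` grid:
nonempty edge subsets of the grid graph in which every vertex has degree 0 or 2. -/
def msapFinset (m n : ℕ) : Finset (Finset (Sym2 (Fin m × Fin n))) :=
  ((gridGraph m n).edgeFinset.powerset).filter
    (fun S => S ≠ ∅ ∧ ∀ v : Fin m × Fin n,
      (S.filter (fun e => v ∈ e)).card = 0 ∨ (S.filter (fun e => v ∈ e)).card = 2)

/-- `p_{m×n}`, the number of multiple self-avoiding polygons in the `m × n` grid. -/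
def msapCount (m n : ℕ) : ℕ := (msapFinset m n).card

/-- The seven polygon mosaic tiles. -/
inductive Tile | T1 | T2 | T3 | T4 | T5 | T6 | T7
  deriving DecidableEq

instance : Fintype Tile :=
  ⟨{.T1, .T2, .T3, .T4, .T5, .T6, .T7}, by intro x; cases x <;> simp⟩

/-- Connection point on the left edge. -/
def cpL : Tile → Bool
  | .T2 => true | .T5 => true | .T6 => true | _ => false

/-- Connection point on the top edge. -/
def cpT : Tile → Bool
  | .T4 => true | .T5 => true | .T7 => true | _ => false

/-- Connection point on the right edge. -/
def cpR : Tile → Bool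
  | .T2 => true | .T3 => true | .T7 => true | _ => false

/-- Connection point on the bottom edge. -/
def cpB : Tile → Bool
  | .T3 => true | .T4 => true | .T6 => true | _ => false

/-- Connection-point data (left, top, right, bottom) of a tile. -/
def cp (X : Tile) : Bool × Bool × Bool × Bool := (cpL X, cpT X, cpR X, cpB X)

/-- A polygon (m,n)-mosaic: a suitably connected m×n matrix of mosaic tiles with
no connection point on the boundary edges. -/
def IsPolygonMosaic (m n : ℕ) (M : Fin m → Fin n → Tile) : Prop :=
  (∀ (i : Fin m) (j j' : Fin n), (j : ℕ) + 1 = (j' : ℕ) → cpR (M i j) = cpL (M i j')) ∧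
  (∀ (i i' : Fin m) (j : Fin n), (i : ℕ) + 1 = (i' : ℕ) → cpB (M i j) = cpT (M i' j)) ∧
  (∀ (i : Fin m) (j : Fin n),
    ((j : ℕ) = 0 → cpL (M i j) = false) ∧
    ((j : ℕ) = n - 1 → cpR (M i j) = false) ∧
    ((i : ℕ) = 0 → cpT (M i j) = false) ∧
    ((i : ℕ) = m - 1 → cpB (M i j) = false))

instance (m n : ℕ) : DecidablePred (IsPolygonMosaic m n) := fun M => by
  unfold IsPolygonMosaic; infer_instance

/-- The finset of all polygon (m,n)-mosaics. -/
def polygonMosaics (m n : ℕ) : Finset (Fin m → Fin n → Tile) :=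
  Finset.univ.filter (IsPolygonMosaic m n)

/-!
Read every grid vertex as a tile whose connection points are the sides through which the
edge set leaves it. A vertex of degree 0 or 2 is exactly one of the seven tiles, and an
edge between neighbours shows up on both of their tiles at once, which is the suitable
connection condition; so edge sets with all degrees in {0, 2} correspond bijectively to
polygon mosaics. The empty edge set is the all-`T1` mosaic, whence the `+ 1`.
-/

inductive Side | left | top | right | bottom
  deriving DecidableEq

instance : Fintype Side :=
  ⟨{.left, .top, .right, .bottom}, by intro d; cases d <;> simp⟩

open Finset

namespace Side

def opp : Side → Side
  | left => right | top => bottom | right => left | bottom => top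

variable {m n : ℕ}

/-- `d.Adj v w`: `w` is the grid neighbour of `v` across side `d` of the tile at `v`
(rows grow downwards, columns to the right). -/
def Adj : Side → Fin m × Fin n → Fin m × Fin n → Prop
  | left, v, w => v.1 = w.1 ∧ (w.2 : ℕ) + 1 = v.2
  | top, v, w => v.2 = w.2 ∧ (w.1 : ℕ) + 1 = v.1
  | right, v, w => v.1 = w.1 ∧ (v.2 : ℕ) + 1 = w.2
  | bottom, v, w => v.2 = w.2 ∧ (v.1 : ℕ) + 1 = w.1

instance (d : Side) (v w : Fin m × Fin n) : Decidable (d.Adj v w) := by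
  cases d <;> unfold Adj <;> infer_instance

def OnBorder : Side → Fin m × Fin n → Prop
  | left, v => (v.2 : ℕ) = 0
  | top, v => (v.1 : ℕ) = 0
  | right, v => (v.2 : ℕ) = n - 1
  | bottom, v => (v.1 : ℕ) = m - 1

theorem adj_opp {d : Side} {v w : Fin m × Fin n} : d.opp.Adj w v ↔ d.Adj v w := by
  cases d <;> simp only [opp, Adj, Fin.ext_iff] <;> omega

theorem Adj.right_unique {d : Side} {v w w' : Fin m × Fin n} (h : d.Adj v w) (h' : d.Adj v w') :
    w = w' := by
  cases d <;> simp only [Adj, Prod.ext_iff, Fin.ext_iff] at * <;> omega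

theorem Adj.side_unique {d d' : Side} {v w : Fin m × Fin n} (h : d.Adj v w) (h' : d'.Adj v w) :
    d = d' := by
  cases d <;> cases d' <;> simp only [Adj, Fin.ext_iff] at * <;> first | rfl | omega

theorem exists_adj_iff_not_onBorder (d : Side) (v : Fin m × Fin n) :
    (∃ w, d.Adj v w) ↔ ¬ d.OnBorder v := by
  have := v.1.isLt; have := v.2.isLt
  constructor
  · rintro ⟨w, hw⟩
    have := w.1.isLt; have := w.2.isLt
    cases d <;> simp only [Adj, OnBorder, Fin.ext_iff] at * <;> omega
  · intro h
    cases d <;> simp only [OnBorder] at h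
    · exact ⟨(v.1, ⟨v.2 - 1, by omega⟩), rfl, by simp only; omega⟩
    · exact ⟨(⟨v.1 - 1, by omega⟩, v.2), rfl, by simp only; omega⟩
    · exact ⟨(v.1, ⟨v.2 + 1, by omega⟩), rfl, rfl⟩
    · exact ⟨(⟨v.1 + 1, by omega⟩, v.2), rfl, rfl⟩

end Side

theorem gridAdj_iff_exists_side {m n : ℕ} {v w : Fin m × Fin n} :
    gridAdj m n v w ↔ ∃ d : Side, d.Adj v w := by
  constructor
  · rintro (⟨h, h' | h'⟩ | ⟨h, h' | h'⟩)
    exacts [⟨.right, h, h'⟩, ⟨.left, h, h'⟩, ⟨.bottom, h, h'⟩, ⟨.top, h, h'⟩]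
  · rintro ⟨d, hd⟩
    cases d <;> simp only [Side.Adj] at hd <;> simp only [gridAdj] <;> tauto

theorem mk_mem_edgeFinset_gridGraph {m n : ℕ} {v w : Fin m × Fin n} :
    s(v, w) ∈ (gridGraph m n).edgeFinset ↔ ∃ d : Side, d.Adj v w := by
  rw [SimpleGraph.mem_edgeFinset, SimpleGraph.mem_edgeSet]
  exact gridAdj_iff_exists_side

namespace Tile

def conn (X : Tile) : Side → Bool
  | .left => cpL X | .top => cpT X | .right => cpR X | .bottom => cpB X

/-- The tile with the given connection points; patterns with neither 0 nor 2 connection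
points are sent to `T1`. -/
def ofConn (c : Side → Bool) : Tile :=
  match c .left, c .top, c .right, c .bottom with
  | true, false, true, false => T2
  | false, false, true, true => T3
  | false, true, false, true => T4
  | true, true, false, false => T5
  | true, false, false, true => T6
  | false, true, true, false => T7
  | _, _, _, _ => T1

theorem card_conn_eq_zero_or_two :
    ∀ X : Tile, #{d | X.conn d} = 0 ∨ #{d | X.conn d} = 2 := by
  decide

theorem ofConn_conn : ∀ X : Tile, ofConn X.conn = X := by
  decide

theorem conn_ofConn :
    ∀ c : Side → Bool, (#{d | c d} = 0 ∨ #{d | c d} = 2) → (ofConn c).conn = c := by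
  decide

end Tile

section EdgeSets

variable {m n : ℕ}

def UsesSide (S : Finset (Sym2 (Fin m × Fin n))) (v : Fin m × Fin n) (d : Side) : Prop :=
  ∃ w, d.Adj v w ∧ s(v, w) ∈ S

instance (S : Finset (Sym2 (Fin m × Fin n))) (v : Fin m × Fin n) (d : Side) :
    Decidable (UsesSide S v d) := by
  unfold UsesSide; infer_instance

theorem usesSide_iff {S : Finset (Sym2 (Fin m × Fin n))} {d : Side} {v w : Fin m × Fin n}
    (h : d.Adj v w) : UsesSide S v d ↔ s(v, w) ∈ S :=
  ⟨fun ⟨_, h', hS⟩ => h.right_unique h' ▸ hS, fun hS => ⟨w, h, hS⟩⟩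

theorem usesSide_opp_iff {S : Finset (Sym2 (Fin m × Fin n))} {d : Side} {v w : Fin m × Fin n}
    (h : d.Adj v w) : UsesSide S w d.opp ↔ UsesSide S v d := by
  rw [usesSide_iff (Side.adj_opp.2 h), usesSide_iff h, Sym2.eq_swap]

theorem not_usesSide_of_onBorder (S : Finset (Sym2 (Fin m × Fin n))) {d : Side}
    {v : Fin m × Fin n} (h : d.OnBorder v) : ¬ UsesSide S v d :=
  fun ⟨w, hw, _⟩ => (d.exists_adj_iff_not_onBorder v).1 ⟨w, hw⟩ h

theorem card_usesSide_eq_card_filter_mem {S : Finset (Sym2 (Fin m × Fin n))}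
    (hS : S ⊆ (gridGraph m n).edgeFinset) (v : Fin m × Fin n) :
    #{d | UsesSide S v d} = #{e ∈ S | v ∈ e} := by
  refine card_bij (fun d hd => s(v, (mem_filter.1 hd).2.choose)) ?_ ?_ ?_
  · intro d hd
    exact mem_filter.2 ⟨(mem_filter.1 hd).2.choose_spec.2, Sym2.mem_mk_left _ _⟩
  · intro d hd d' hd' h
    have hw := (mem_filter.1 hd).2.choose_spec.1
    have hw' := (mem_filter.1 hd').2.choose_spec.1
    rw [Sym2.congr_right.1 h] at hw
    exact hw.side_unique hw'
  · intro e he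
    obtain ⟨heS, hve⟩ := mem_filter.1 he
    obtain ⟨w, rfl⟩ := Sym2.mem_iff_exists.1 hve
    obtain ⟨d, hd⟩ := mk_mem_edgeFinset_gridGraph.1 (hS heS)
    have hdS : UsesSide S v d := ⟨w, hd, heS⟩
    refine ⟨d, mem_filter.2 ⟨mem_univ _, hdS⟩, ?_⟩
    rw [hd.right_unique hdS.choose_spec.1]

def IsPolygonEdgeSet (m n : ℕ) (S : Finset (Sym2 (Fin m × Fin n))) : Prop :=
  S ⊆ (gridGraph m n).edgeFinset ∧ ∀ v, #{e ∈ S | v ∈ e} = 0 ∨ #{e ∈ S | v ∈ e} = 2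

theorem mem_msapFinset {S : Finset (Sym2 (Fin m × Fin n))} :
    S ∈ msapFinset m n ↔ IsPolygonEdgeSet m n S ∧ S ≠ ∅ := by
  rw [msapFinset, mem_filter, mem_powerset, IsPolygonEdgeSet]
  tauto

end EdgeSets

section Correspondence

variable {m n : ℕ}

theorem mem_polygonMosaics {M : Fin m → Fin n → Tile} :
    M ∈ polygonMosaics m n ↔ IsPolygonMosaic m n M := by
  rw [polygonMosaics, mem_filter, and_iff_right (mem_univ _)]

theorem isPolygonMosaic_iff (M : Fin m → Fin n → Tile) :
    IsPolygonMosaic m n M ↔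
      (∀ (d : Side) (v w : Fin m × Fin n), d.Adj v w →
        (M w.1 w.2).conn d.opp = (M v.1 v.2).conn d) ∧
      ∀ (d : Side) (v : Fin m × Fin n), d.OnBorder v → (M v.1 v.2).conn d = false := by
  constructor
  · rintro ⟨hrow, hcol, hbd⟩
    refine ⟨fun d v w hvw => ?_, fun d v hv => ?_⟩
    · obtain ⟨i, j⟩ := v
      obtain ⟨i', j'⟩ := w
      cases d <;> obtain ⟨he, hs⟩ := hvw <;> dsimp only at he hs <;> subst he
      exacts [hrow i j' j hs, hcol i' i j hs, (hrow i j j' hs).symm, (hcol i i' j hs).symm]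
    · cases d
      exacts [(hbd _ _).1 hv, (hbd _ _).2.2.1 hv, (hbd _ _).2.1 hv, (hbd _ _).2.2.2 hv]
  · rintro ⟨hadj, hbd⟩
    exact ⟨fun i j j' h => (hadj .right (i, j) (i, j') ⟨rfl, h⟩).symm,
      fun i i' j h => (hadj .bottom (i, j) (i', j) ⟨rfl, h⟩).symm,
      fun i j => ⟨hbd .left (i, j), hbd .right (i, j), hbd .top (i, j), hbd .bottom (i, j)⟩⟩

def edgesToMosaic (S : Finset (Sym2 (Fin m × Fin n))) : Fin m → Fin n → Tile :=
  fun i j => Tile.ofConn fun d => decide (UsesSide S (i, j) d)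

def mosaicToEdges (M : Fin m → Fin n → Tile) : Finset (Sym2 (Fin m × Fin n)) :=
  {e | ∃ (d : Side) (v w : Fin m × Fin n), d.Adj v w ∧ (M v.1 v.2).conn d ∧ e = s(v, w)}

theorem conn_edgesToMosaic {S : Finset (Sym2 (Fin m × Fin n))} (hS : IsPolygonEdgeSet m n S)
    (v : Fin m × Fin n) : (edgesToMosaic S v.1 v.2).conn = fun d => decide (UsesSide S v d) :=
  Tile.conn_ofConn _ <| by
    simpa only [decide_eq_true_eq, card_usesSide_eq_card_filter_mem hS.1] using hS.2 v

theorem edgesToMosaic_isPolygonMosaic {S : Finset (Sym2 (Fin m × Fin n))}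
    (hS : IsPolygonEdgeSet m n S) : IsPolygonMosaic m n (edgesToMosaic S) := by
  refine (isPolygonMosaic_iff _).2 ⟨fun d v w hvw => ?_, fun d v hv => ?_⟩
  · simp only [conn_edgesToMosaic hS, usesSide_opp_iff hvw]
  · simpa only [conn_edgesToMosaic hS, decide_eq_false_iff_not]
      using not_usesSide_of_onBorder S hv

theorem edgesToMosaic_empty :
    edgesToMosaic (∅ : Finset (Sym2 (Fin m × Fin n))) = fun _ _ => .T1 := by
  funext i j
  simp only [edgesToMosaic, UsesSide, notMem_empty, and_false, exists_false, decide_false]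
  rfl

theorem mk_mem_mosaicToEdges {M : Fin m → Fin n → Tile} (hM : IsPolygonMosaic m n M)
    {v w : Fin m × Fin n} :
    s(v, w) ∈ mosaicToEdges M ↔ ∃ d : Side, d.Adj v w ∧ (M v.1 v.2).conn d := by
  simp only [mosaicToEdges, mem_filter, mem_univ, true_and, Sym2.eq_iff]
  constructor
  · rintro ⟨d, a, b, hab, hc, ⟨rfl, rfl⟩ | ⟨rfl, rfl⟩⟩
    · exact ⟨d, hab, hc⟩
    · exact ⟨d.opp, Side.adj_opp.2 hab, ((isPolygonMosaic_iff M).1 hM).1 d _ _ hab ▸ hc⟩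
  · rintro ⟨d, hd, hc⟩
    exact ⟨d, v, w, hd, hc, Or.inl ⟨rfl, rfl⟩⟩

theorem usesSide_mosaicToEdges {M : Fin m → Fin n → Tile} (hM : IsPolygonMosaic m n M)
    (v : Fin m × Fin n) (d : Side) : UsesSide (mosaicToEdges M) v d ↔ (M v.1 v.2).conn d := by
  constructor
  · rintro ⟨w, hvw, hmem⟩
    obtain ⟨d', hd', hc⟩ := (mk_mem_mosaicToEdges hM).1 hmem
    rwa [hd'.side_unique hvw] at hc
  · intro hc
    obtain ⟨w, hvw⟩ := (d.exists_adj_iff_not_onBorder v).2 fun hv => by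
      simp [((isPolygonMosaic_iff M).1 hM).2 d v hv] at hc
    exact ⟨w, hvw, (mk_mem_mosaicToEdges hM).2 ⟨d, hvw, hc⟩⟩

theorem mosaicToEdges_subset (M : Fin m → Fin n → Tile) :
    mosaicToEdges M ⊆ (gridGraph m n).edgeFinset := by
  intro e he
  obtain ⟨d, v, w, hvw, -, rfl⟩ := (mem_filter.1 he).2
  exact mk_mem_edgeFinset_gridGraph.2 ⟨d, hvw⟩

theorem mosaicToEdges_isPolygonEdgeSet {M : Fin m → Fin n → Tile} (hM : IsPolygonMosaic m n M) :
    IsPolygonEdgeSet m n (mosaicToEdges M) := by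
  refine ⟨mosaicToEdges_subset M, fun v => ?_⟩
  rw [← card_usesSide_eq_card_filter_mem (mosaicToEdges_subset M)]
  simp only [usesSide_mosaicToEdges hM]
  exact Tile.card_conn_eq_zero_or_two _

theorem edgesToMosaic_mosaicToEdges {M : Fin m → Fin n → Tile} (hM : IsPolygonMosaic m n M) :
    edgesToMosaic (mosaicToEdges M) = M := by
  funext i j
  conv_rhs => rw [← Tile.ofConn_conn (M i j)]
  unfold edgesToMosaic
  congr
  funext d
  simp only [usesSide_mosaicToEdges hM (i, j), Bool.decide_eq_true]

theorem mosaicToEdges_edgesToMosaic {S : Finset (Sym2 (Fin m × Fin n))}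
    (hS : IsPolygonEdgeSet m n S) : mosaicToEdges (edgesToMosaic S) = S := by
  ext e
  induction e using Sym2.ind with
  | _ v w =>
    rw [mk_mem_mosaicToEdges (edgesToMosaic_isPolygonMosaic hS)]
    simp only [conn_edgesToMosaic hS v, decide_eq_true_eq]
    constructor
    · rintro ⟨d, hd, hu⟩
      exact (usesSide_iff hd).1 hu
    · intro h
      obtain ⟨d, hd⟩ := mk_mem_edgeFinset_gridGraph.1 (hS.1 h)
      exact ⟨d, hd, (usesSide_iff hd).2 h⟩

end Correspondence

def polygonEdgeSetEquiv (m n : ℕ) :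
    {S // IsPolygonEdgeSet m n S} ≃ {M // IsPolygonMosaic m n M} where
  toFun S := ⟨edgesToMosaic S, edgesToMosaic_isPolygonMosaic S.2⟩
  invFun M := ⟨mosaicToEdges M, mosaicToEdges_isPolygonEdgeSet M.2⟩
  left_inv S := Subtype.ext (mosaicToEdges_edgesToMosaic S.2)
  right_inv M := Subtype.ext (edgesToMosaic_mosaicToEdges M.2)

theorem isPolygonEdgeSet_empty (m n : ℕ) : IsPolygonEdgeSet m n ∅ :=
  ⟨empty_subset _, fun _ => Or.inl rfl⟩

def msapEquiv (m n : ℕ) :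
    {S // S ∈ msapFinset m n} ≃ {M // M ∈ polygonMosaics m n ∧ M ≠ fun _ _ => .T1} :=
  have empty_iff (S : {S // IsPolygonEdgeSet m n S}) :
      S.1 ≠ ∅ ↔ (polygonEdgeSetEquiv m n S).1 ≠ fun _ _ => .T1 := by
    let S₀ : {S // IsPolygonEdgeSet m n S} := ⟨∅, isPolygonEdgeSet_empty m n⟩
    rw [← edgesToMosaic_empty]
    change S.1 ≠ S₀.1 ↔ _ ≠ (polygonEdgeSetEquiv m n S₀).1
    rw [Ne, Ne, ← Subtype.ext_iff, ← Subtype.ext_iff, Equiv.apply_eq_iff_eq]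
  (Equiv.subtypeEquivRight fun _ => mem_msapFinset).trans <|
    (Equiv.subtypeSubtypeEquivSubtypeInter _ _).symm.trans <|
    ((polygonEdgeSetEquiv m n).subtypeEquiv empty_iff).trans <|
    (Equiv.subtypeSubtypeEquivSubtypeInter _ _).trans <|
    Equiv.subtypeEquivRight fun _ => by rw [mem_polygonMosaics]

theorem msap_mosaic_correspondence_general (m n : ℕ) :
    Nonempty ({ S // S ∈ msapFinset m n } ≃
      { M // M ∈ polygonMosaics m n ∧ M ≠ fun _ _ => Tile.T1 }) ∧
    (polygonMosaics m n).card = msapCount m n + 1 := by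
  refine ⟨⟨msapEquiv m n⟩, ?_⟩
  have hT1 : (fun _ _ => .T1) ∈ polygonMosaics m n := mem_polygonMosaics.2 <|
    edgesToMosaic_empty ▸ edgesToMosaic_isPolygonMosaic (isPolygonEdgeSet_empty m n)
  rw [msapCount, ← card_erase_add_one hT1, ← Fintype.card_coe, ← Fintype.card_coe]
  congr 1
  exact (Fintype.card_congr ((msapEquiv m n).trans
    (Equiv.subtypeEquivRight fun _ => by rw [mem_erase, and_comm]))).symm

/-- There is a bijection between MSAPs in the m×n grid and nontrivial polygon
(m,n)-mosaics; in particular the number of polygon (m,n)-mosaics is p_{m×n} + 1. -/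
theorem msap_mosaic_correspondence (m n : ℕ) (hm : 1 ≤ m) (hn : 1 ≤ n) :
    Nonempty ({ S // S ∈ msapFinset m n } ≃
      { M // M ∈ polygonMosaics m n ∧ M ≠ fun _ _ => Tile.T1 }) ∧
    (polygonMosaics m n).card = msapCount m n + 1 :=
  msap_mosaic_correspondence_general m n
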